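/- Let d ≥ 1 and n ≥ 1 and let μ be a partition of n into at most d parts. Then the soundness error of the permutation test on the Haar-twirled unequal input is exactly the inverse multinomial coefficient: Tr[Π_{(n)} · ρ_≠^μ] = 1/binom(n,μ) = μ₁!·μ₂!⋯μ_d!/n!. Equivalently, ⟨e_μ| Π_{(n)} |e_μ⟩ = μ₁!·μ₂!⋯μ_d!/n!. -/

import Mathlib

open MeasureTheory Matrix
open scoped ComplexOrder

noncomputable section

/-- The unitary group `U(d)`. -/
abbrev UG (d : ℕ) := Matrix.unitaryGroup (Fin d) ℂ

noncomputable instance (d : ℕ) : MeasurableSpace (UG d) := borel _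

instance (d : ℕ) : BorelSpace (UG d) := ⟨rfl⟩

/-- The permutation matrix `ψ(π)` on `(ℂ^d)^{⊗n}`, with `(x,y)` entry `1` iff `y = x ∘ π`. -/
def psi (d n : ℕ) (π : Equiv.Perm (Fin n)) : Matrix (Fin n → Fin d) (Fin n → Fin d) ℂ :=
  Matrix.of fun x y => if y = x ∘ π then 1 else 0

/-- The symmetrizer `Π_{(n)} = (1/n!) ∑_{π ∈ S_n} ψ(π)`. -/
def symmetrizer (d n : ℕ) : Matrix (Fin n → Fin d) (Fin n → Fin d) ℂ :=
  ((n.factorial : ℂ))⁻¹ • ∑ π : Equiv.Perm (Fin n), psi d n π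

/-- The `n`-fold tensor power of a `d × d` matrix. -/
def tpow (d n : ℕ) (U : Matrix (Fin d) (Fin d) ℂ) :
    Matrix (Fin n → Fin d) (Fin n → Fin d) ℂ :=
  Matrix.of fun x y => ∏ i, U (x i) (y i)

/-- The list consisting of `μ 0` copies of `0`, then `μ 1` copies of `1`, etc. -/
def wordList (d : ℕ) (μ : Fin d → ℕ) : List (Fin d) :=
  (List.ofFn fun i => List.replicate (μ i) i).flatten

lemma wordList_length (d : ℕ) (μ : Fin d → ℕ) : (wordList d μ).length = ∑ i, μ i := by
  simp [wordList, List.length_flatten, Function.comp, List.sum_ofFn]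

/-- The word indexing the basis vector `|e_μ⟩`: the first `μ 0` tensor factors carry the
first basis label, the next `μ 1` factors the second basis label, etc. -/
def word (d n : ℕ) (μ : Fin d → ℕ) (hsum : ∑ i, μ i = n) (j : Fin n) : Fin d :=
  (wordList d μ).get ⟨j, by rw [wordList_length, hsum]; exact j.isLt⟩

/-- The Haar-twirled state `ρ_≠^μ = ∫ U^{⊗n} |e_μ⟩⟨e_μ| (U^{⊗n})^† dU`
(entrywise Bochner integral). -/
def rhoNE (d n : ℕ) (μ : Fin d → ℕ) (hsum : ∑ i, μ i = n) (haar : Measure (UG d)) :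
    Matrix (Fin n → Fin d) (Fin n → Fin d) ℂ :=
  Matrix.of fun x y =>
    ∫ U : UG d, tpow d n (U : Matrix (Fin d) (Fin d) ℂ) x (word d n μ hsum) *
      star (tpow d n (U : Matrix (Fin d) (Fin d) ℂ) y (word d n μ hsum)) ∂haar

/-- The partition `(n, 0, …, 0)`. -/
def muEq (d n : ℕ) (hd : 0 < d) : Fin d → ℕ := fun i => if i = ⟨0, hd⟩ then n else 0

lemma muEq_sum (d n : ℕ) (hd : 0 < d) : ∑ i, muEq d n hd i = n := by
  simp [muEq]

/-- The state `ρ_=^n = ρ_≠^{(n,0,…,0)}`. -/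
def rhoEQ (d n : ℕ) (hd : 0 < d) (haar : Measure (UG d)) :
    Matrix (Fin n → Fin d) (Fin n → Fin d) ℂ :=
  rhoNE d n (muEq d n hd) (muEq_sum d n hd) haar


/-!
Conjugation by `U^{⊗n}` commutes with every permutation of the tensor factors, and `U^{⊗n}` is
unitary, so the twirl drops out of the trace: `Tr[Π ρ_≠^μ] = ∫ ⟨e_μ| (U^{⊗n})† Π U^{⊗n} |e_μ⟩ dU
= ⟨e_μ| Π |e_μ⟩`. The diagonal entry `⟨x| Π |x⟩` is the fraction of permutations fixing the word
`x`, and the stabiliser of `e_μ` is the Young subgroup `S_{μ₁} × ⋯ × S_{μ_d}` of order `∏ μᵢ!`.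
-/

section TensorPower

variable {d n : ℕ}

lemma tpow_mul (A B : Matrix (Fin d) (Fin d) ℂ) :
    tpow d n (A * B) = tpow d n A * tpow d n B := by
  ext x y
  simp only [tpow, mul_apply, of_apply, Fintype.prod_sum, Finset.prod_mul_distrib]

lemma tpow_one : tpow d n 1 = 1 := by
  ext x y
  simp only [tpow, of_apply, one_apply, Finset.prod_boole, Finset.mem_univ, true_implies,
    funext_iff]

lemma tpow_conjTranspose (A : Matrix (Fin d) (Fin d) ℂ) : tpow d n Aᴴ = (tpow d n A)ᴴ := by
  ext x y
  simp [tpow, conjTranspose_apply, star_prod]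

lemma tpow_mem_unitaryGroup {U : Matrix (Fin d) (Fin d) ℂ} (hU : U ∈ unitaryGroup (Fin d) ℂ) :
    tpow d n U ∈ unitaryGroup (Fin n → Fin d) ℂ := by
  rw [mem_unitaryGroup_iff, star_eq_conjTranspose, ← tpow_conjTranspose, ← tpow_mul,
    ← star_eq_conjTranspose, mem_unitaryGroup_iff.mp hU, tpow_one]

end TensorPower

section Symmetrizer

variable {d n : ℕ}

lemma psi_mul_apply (π : Equiv.Perm (Fin n)) (M : Matrix (Fin n → Fin d) (Fin n → Fin d) ℂ)
    (x y : Fin n → Fin d) : (psi d n π * M) x y = M (x ∘ π) y := by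
  simp [psi, mul_apply]

lemma mul_psi_apply (π : Equiv.Perm (Fin n)) (M : Matrix (Fin n → Fin d) (Fin n → Fin d) ℂ)
    (x y : Fin n → Fin d) : (M * psi d n π) x y = M x (y ∘ π.symm) := by
  have hcomp : ∀ z : Fin n → Fin d, y = z ∘ π ↔ z = y ∘ π.symm := fun z =>
    ⟨fun h => by simp [h, Function.comp_assoc], fun h => by simp [h, Function.comp_assoc]⟩
  simp [psi, mul_apply, hcomp]

lemma psi_mul_tpow (π : Equiv.Perm (Fin n)) (U : Matrix (Fin d) (Fin d) ℂ) :
    psi d n π * tpow d n U = tpow d n U * psi d n π := by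
  ext x y
  rw [psi_mul_apply, mul_psi_apply]
  simp only [tpow, of_apply, Function.comp_apply]
  exact (Equiv.prod_comp π.symm fun i => U (x (π i)) (y i)).symm.trans (by simp)

lemma symmetrizer_mul_tpow (U : Matrix (Fin d) (Fin d) ℂ) :
    symmetrizer d n * tpow d n U = tpow d n U * symmetrizer d n := by
  simp only [symmetrizer, Matrix.smul_mul, Matrix.mul_smul, Finset.sum_mul, Finset.mul_sum,
    psi_mul_tpow]

lemma conjTranspose_tpow_mul_symmetrizer_mul_tpow {U : Matrix (Fin d) (Fin d) ℂ}
    (hU : U ∈ unitaryGroup (Fin d) ℂ) :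
    (tpow d n U)ᴴ * symmetrizer d n * tpow d n U = symmetrizer d n := by
  rw [Matrix.mul_assoc, symmetrizer_mul_tpow, ← Matrix.mul_assoc, ← star_eq_conjTranspose,
    Unitary.star_mul_self_of_mem (tpow_mem_unitaryGroup hU), Matrix.one_mul]

lemma symmetrizer_apply_self (x : Fin n → Fin d) :
    symmetrizer d n x x = Fintype.card {π : Equiv.Perm (Fin n) // x ∘ π = x} / n.factorial := by
  rw [Fintype.card_subtype, Finset.card_filter, div_eq_inv_mul]
  simp only [symmetrizer, psi, Matrix.smul_apply, Matrix.sum_apply, of_apply, smul_eq_mul,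
    Nat.cast_sum, Nat.cast_ite, Nat.cast_one, Nat.cast_zero, eq_comm]

end Symmetrizer

lemma List.card_get_eq_count {α : Type*} [DecidableEq α] (l : List α) (a : α) :
    Fintype.card {j : Fin l.length // l.get j = a} = l.count a := by
  have h := Multiset.count_map l.get Finset.univ.val a
  rw [Fin.univ_val_map, List.ofFn_get, Multiset.coe_count] at h
  rw [h, Fintype.card_subtype]
  simp [Finset.card, Finset.filter, eq_comm]

section Word

variable {d n : ℕ}

lemma wordList_count (μ : Fin d → ℕ) (a : Fin d) : (wordList d μ).count a = μ a := by
  simp [wordList, List.count_flatten, List.map_ofFn, List.sum_ofFn, List.count_replicate,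
    Finset.sum_ite_eq']

lemma card_word_eq (μ : Fin d → ℕ) (hsum : ∑ i, μ i = n) (a : Fin d) :
    Fintype.card {j : Fin n // word d n μ hsum j = a} = μ a := by
  have hlen : (wordList d μ).length = n := by rw [wordList_length, hsum]
  rw [← wordList_count μ a, ← List.card_get_eq_count]
  exact Fintype.card_congr (Equiv.subtypeEquiv (finCongr hlen.symm) fun _ => Iff.rfl)

lemma card_stabilizer_word (μ : Fin d → ℕ) (hsum : ∑ i, μ i = n) :
    Fintype.card {π : Equiv.Perm (Fin n) // word d n μ hsum ∘ π = word d n μ hsum}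
      = ∏ i, (μ i).factorial := by
  simp only [DomMulAct.stabilizer_card, card_word_eq]

lemma symmetrizer_apply_word (μ : Fin d → ℕ) (hsum : ∑ i, μ i = n) :
    symmetrizer d n (word d n μ hsum) (word d n μ hsum)
      = (∏ i, ((μ i).factorial : ℂ)) / (n.factorial : ℂ) := by
  rw [symmetrizer_apply_self, card_stabilizer_word, Nat.cast_prod]

end Word

lemma Nat.inv_cast_multinomial {α K : Type*} [Field K] [CharZero K] (s : Finset α)
    (f : α → ℕ) :
    (Nat.multinomial s f : K)⁻¹ = (∏ i ∈ s, ((f i).factorial : K)) / (∑ i ∈ s, f i).factorial := by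
  have hprod : (∏ i ∈ s, ((f i).factorial : K)) ≠ 0 :=
    Finset.prod_ne_zero_iff.mpr fun i _ => Nat.cast_ne_zero.mpr (f i).factorial_ne_zero
  rw [← Nat.multinomial_spec s f, Nat.cast_mul, Nat.cast_prod, mul_comm,
    div_mul_cancel_right₀ hprod]

section Twirl

variable {d n : ℕ}

lemma continuous_tpow_apply (x y : Fin n → Fin d) :
    Continuous fun U : UG d => tpow d n (U : Matrix (Fin d) (Fin d) ℂ) x y := by
  simp only [tpow, of_apply]
  exact continuous_finsetProd _ fun i _ => continuous_subtype_val.matrix_elem (x i) (y i)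

lemma norm_tpow_apply_le_one (U : UG d) (x y : Fin n → Fin d) :
    ‖tpow d n (U : Matrix (Fin d) (Fin d) ℂ) x y‖ ≤ 1 := by
  simp only [tpow, of_apply, norm_prod]
  exact Finset.prod_le_one (fun _ _ => norm_nonneg _)
    fun i _ => entry_norm_bound_of_unitary U.2 _ _

lemma integrable_tpow_apply_mul_star (haar : Measure (UG d)) [IsFiniteMeasure haar]
    (x y w : Fin n → Fin d) :
    Integrable (fun U : UG d => tpow d n (U : Matrix (Fin d) (Fin d) ℂ) x w *
      star (tpow d n (U : Matrix (Fin d) (Fin d) ℂ) y w)) haar := by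
  refine Integrable.of_bound
    ((continuous_tpow_apply x w).mul (continuous_tpow_apply y w).star).aestronglyMeasurable 1
    (ae_of_all _ fun U => ?_)
  rw [norm_mul, norm_star]
  exact mul_le_one₀ (norm_tpow_apply_le_one U x w) (norm_nonneg _) (norm_tpow_apply_le_one U y w)

lemma trace_mul_rhoNE (A : Matrix (Fin n → Fin d) (Fin n → Fin d) ℂ) (μ : Fin d → ℕ)
    (hsum : ∑ i, μ i = n) (haar : Measure (UG d)) [IsFiniteMeasure haar] :
    trace (A * rhoNE d n μ hsum haar) = ∫ U : UG d,
      ((tpow d n (U : Matrix (Fin d) (Fin d) ℂ))ᴴ * A * tpow d n (U : Matrix (Fin d) (Fin d) ℂ))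
        (word d n μ hsum) (word d n μ hsum) ∂haar := by
  set w := word d n μ hsum
  set T := fun U : UG d => tpow d n (U : Matrix (Fin d) (Fin d) ℂ)
  have hint : ∀ x y, Integrable (fun U => A x y * (T U y w * star (T U x w))) haar :=
    fun x y => (integrable_tpow_apply_mul_star haar y x w).const_mul _
  calc trace (A * rhoNE d n μ hsum haar)
      = ∑ x, ∑ y, ∫ U, A x y * (T U y w * star (T U x w)) ∂haar := by
        simp only [trace, diag, mul_apply, rhoNE, of_apply, integral_const_mul, T, w]
    _ = ∫ U, ∑ x, ∑ y, A x y * (T U y w * star (T U x w)) ∂haar := by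
        rw [integral_finsetSum _ fun x _ => integrable_finsetSum _ fun y _ => hint x y]
        simp only [integral_finsetSum _ fun y _ => hint _ y]
    _ = ∫ U, ((T U)ᴴ * A * T U) w w ∂haar := by
        refine integral_congr_ae (ae_of_all _ fun U => ?_)
        simp only [mul_apply, conjTranspose_apply, Finset.sum_mul]
        rw [Finset.sum_comm]
        exact Finset.sum_congr rfl fun x _ => Finset.sum_congr rfl fun y _ => by ring

end Twirl

theorem permutation_test_soundness_error_general (d n : ℕ)
    (μ : Fin d → ℕ) (hsum : ∑ i, μ i = n)
    (haar : Measure (UG d)) [IsProbabilityMeasure haar] :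
    Matrix.trace (symmetrizer d n * rhoNE d n μ hsum haar)
        = ((Nat.multinomial Finset.univ μ : ℂ))⁻¹ ∧
    ((Nat.multinomial Finset.univ μ : ℂ))⁻¹
        = (∏ i, ((μ i).factorial : ℂ)) / (n.factorial : ℂ) ∧
    symmetrizer d n (word d n μ hsum) (word d n μ hsum)
        = (∏ i, ((μ i).factorial : ℂ)) / (n.factorial : ℂ) := by
  have hmultinomial : ((Nat.multinomial Finset.univ μ : ℂ))⁻¹
      = (∏ i, ((μ i).factorial : ℂ)) / (n.factorial : ℂ) := by
    rw [Nat.inv_cast_multinomial, hsum]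
  refine ⟨?_, hmultinomial, symmetrizer_apply_word μ hsum⟩
  have htwirl : ∀ U : UG d, ((tpow d n (U : Matrix (Fin d) (Fin d) ℂ))ᴴ * symmetrizer d n *
      tpow d n (U : Matrix (Fin d) (Fin d) ℂ)) = symmetrizer d n :=
    fun U => conjTranspose_tpow_mul_symmetrizer_mul_tpow U.2
  simp only [trace_mul_rhoNE, htwirl, integral_const, probReal_univ, one_smul,
    symmetrizer_apply_word, hmultinomial]

/-- The soundness error of the permutation test on the Haar-twirled
unequal input is exactly the inverse multinomial coefficient. -/
theorem permutation_test_soundness_error (d n : ℕ) (hd : 1 ≤ d) (hn : 1 ≤ n)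
    (μ : Fin d → ℕ) (hmono : ∀ i j : Fin d, i ≤ j → μ j ≤ μ i) (hsum : ∑ i, μ i = n)
    (haar : Measure (UG d)) [IsProbabilityMeasure haar]
    (hinv : ∀ V : UG d, Measure.map (fun U => V * U) haar = haar) :
    Matrix.trace (symmetrizer d n * rhoNE d n μ hsum haar)
        = ((Nat.multinomial Finset.univ μ : ℂ))⁻¹ ∧
    ((Nat.multinomial Finset.univ μ : ℂ))⁻¹
        = (∏ i, ((μ i).factorial : ℂ)) / (n.factorial : ℂ) ∧
    symmetrizer d n (word d n μ hsum) (word d n μ hsum)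
        = (∏ i, ((μ i).factorial : ℂ)) / (n.factorial : ℂ) :=
  permutation_test_soundness_error_general d n μ hsum haar

end
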